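/- Let G = (V, E) be an undirected multigraph with terminal set T ⊆ V, and let G' be a multigraph obtained from G by a finite sequence of element-connectivity preserving reduction operations (each operation deletes or contracts an edge joining two non-terminals and leaves κ'_{(·,T)}(u,v) unchanged for all distinct terminals u, v ∈ T). Let p'q' be an edge of G' joining two non-terminal vertices such that deleting p'q' from G' preserves κ' between all pairs of distinct terminals, and let pq be the edge of G corresponding to p'q' (an edge of G, not deleted or contracted during the sequence, whose endpoints are mapped by the contractions onto p' and q'). Then deleting pq from G preserves κ'_{(G,T)}(u,v) for all distinct terminals u, v ∈ T, i.e., κ'_{(G−pq,T)}(u,v) = κ'_{(G,T)}(u,v) for all distinct u, v ∈ T. -/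

import Mathlib

/-!
If, after a sequence of element-connectivity preserving reduction operations,
the (surviving) edge corresponding to an original edge `pq` between non-terminals
becomes deletable, then `pq` was already deletable in the original graph.

A multigraph is given by a finite index type `ι` of edges and a map
`ends : ι → Sym2 V` of endpoints.  A state of the reduction process is a pair
`(A, φ)` where `A : Finset ι` is the set of surviving edges and `φ : V → V`
sends each original vertex to the vertex it has been merged into, so the
current graph has edges `Sym2.map φ (ends i)` for `i ∈ A`.
-/

attribute [local instance] Classical.propDecidable

noncomputable section

/-- One adjacency step using an edge from the index set `A`, avoiding the
deleted vertex set `Fv`. -/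
def AdjI {V ι : Type*} (ends : ι → Sym2 V) (A : Finset ι) (Fv : Set V) (a b : V) : Prop :=
  (∃ i ∈ A, ends i = s(a, b)) ∧ a ∉ Fv ∧ b ∉ Fv

/-- `u` and `v` lie in the same connected component of the graph with edge set `A`
after deleting the vertices in `Fv`. -/
def ConnectsI {V ι : Type*} (ends : ι → Sym2 V) (A : Finset ι) (Fv : Set V) (u v : V) : Prop :=
  Relation.ReflTransGen (AdjI ends A Fv) u v

/-- Element-connectivity `κ'`: minimum cardinality of a set `F = Fv ∪ Fe` of
non-terminal vertices and edges whose deletion disconnects `u` from `v`. -/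
def elemConnI {V ι : Type*} (ends : ι → Sym2 V) (A : Finset ι) (T : Set V) (u v : V) : ℕ :=
  sInf {n | ∃ (Fv : Finset V) (Fe : Finset ι), (↑Fv : Set V) ⊆ Tᶜ ∧ Fe ⊆ A ∧
    n = Fv.card + Fe.card ∧ ¬ ConnectsI ends (A \ Fe) (↑Fv) u v}

/-- The map identifying `b` with `a`. -/
def collapse {V : Type*} [DecidableEq V] (a b : V) : V → V :=
  fun x => if x = b then a else x

/-- An element-connectivity preserving reduction operation: delete or contract an
edge of the current graph joining two non-terminals, in such a way that the
element-connectivity between every pair of distinct terminals is unchanged. -/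
inductive RedStep {V ι : Type*} [DecidableEq V] (ends : ι → Sym2 V) (T : Set V) :
    Finset ι × (V → V) → Finset ι × (V → V) → Prop
  | del (A : Finset ι) (φ : V → V) (i : ι) (a b : V)
      (hi : i ∈ A) (hends : Sym2.map φ (ends i) = s(a, b)) (hab : a ≠ b)
      (ha : a ∉ T) (hb : b ∉ T)
      (hpres : ∀ u ∈ T, ∀ v ∈ T, u ≠ v →
        elemConnI (fun j => Sym2.map φ (ends j)) (A.erase i) T u v =
          elemConnI (fun j => Sym2.map φ (ends j)) A T u v) :
      RedStep ends T (A, φ) (A.erase i, φ)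
  | contr (A : Finset ι) (φ : V → V) (i : ι) (a b : V)
      (hi : i ∈ A) (hends : Sym2.map φ (ends i) = s(a, b)) (hab : a ≠ b)
      (ha : a ∉ T) (hb : b ∉ T)
      (hpres : ∀ u ∈ T, ∀ v ∈ T, u ≠ v →
        elemConnI (fun j => Sym2.map (collapse a b ∘ φ) (ends j)) (A.erase i) T u v =
          elemConnI (fun j => Sym2.map φ (ends j)) A T u v) :
      RedStep ends T (A, φ) (A.erase i, collapse a b ∘ φ)


section Helpers

open Relation

variable {V ι : Type*}

lemma adjI_mono {ends : ι → Sym2 V} {A B : Finset ι} {Fv : Set V}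
    (h : A ⊆ B) {x y : V} (hxy : AdjI ends A Fv x y) : AdjI ends B Fv x y := by
  obtain ⟨⟨i, hi, he⟩, hx, hy⟩ := hxy
  exact ⟨⟨i, h hi, he⟩, hx, hy⟩

lemma connectsI_mono {ends : ι → Sym2 V} {A B : Finset ι} {Fv : Set V}
    (h : A ⊆ B) {u v : V} (hc : ConnectsI ends A Fv u v) : ConnectsI ends B Fv u v :=
  ReflTransGen.mono (fun _ _ hxy => adjI_mono h hxy) _ _ hc

lemma reflTransGen_of_le {α : Type*} {r s : α → α → Prop}
    (h : ∀ x y, r x y → Relation.ReflTransGen s x y) {u v : α}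
    (hc : Relation.ReflTransGen r u v) : Relation.ReflTransGen s u v := by
  induction hc with
  | refl => exact Relation.ReflTransGen.refl
  | tail _ h2 ih => exact ih.trans (h _ _ h2)

lemma connectsI_empty {ends : ι → Sym2 V} {Fv : Set V} {u v : V}
    (h : ConnectsI ends ∅ Fv u v) : u = v := by
  induction h with
  | refl => rfl
  | tail _ h2 ih =>
    obtain ⟨⟨i, hi, -⟩, -, -⟩ := h2
    exact absurd hi (Finset.notMem_empty i)

lemma elemConnI_set_nonempty (ends : ι → Sym2 V) (A : Finset ι) (T : Set V) {u v : V}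
    (huv : u ≠ v) :
    {n | ∃ (Fv : Finset V) (Fe : Finset ι), (↑Fv : Set V) ⊆ Tᶜ ∧ Fe ⊆ A ∧
      n = Fv.card + Fe.card ∧ ¬ ConnectsI ends (A \ Fe) (↑Fv) u v}.Nonempty := by
  refine ⟨0 + A.card, (∅ : Finset V), A, by simp, Finset.Subset.refl A, by simp, ?_⟩
  rw [Finset.sdiff_self]
  intro hc
  exact huv (connectsI_empty hc)

/-- Deleting an extra edge never increases element connectivity. -/
lemma elemConnI_erase_le (ends : ι → Sym2 V) (A : Finset ι) (T : Set V) (e : ι)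
    {u v : V} (huv : u ≠ v) :
    elemConnI ends (A.erase e) T u v ≤ elemConnI ends A T u v := by
  obtain ⟨Fv, Fe, hT, hFe, hcard, hconn⟩ :=
    Nat.sInf_mem (elemConnI_set_nonempty ends A T huv)
  have hsub : (A.erase e) \ (Fe.erase e) ⊆ A \ Fe := by
    intro i hi
    simp only [Finset.mem_sdiff, Finset.mem_erase] at hi ⊢
    tauto
  calc elemConnI ends (A.erase e) T u v
      ≤ Fv.card + (Fe.erase e).card := by
        refine Nat.sInf_le ⟨Fv, Fe.erase e, hT, Finset.erase_subset_erase e hFe, rfl, ?_⟩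
        exact fun hc => hconn (connectsI_mono hsub hc)
    _ ≤ Fv.card + Fe.card := Nat.add_le_add_left (Finset.card_erase_le) _
    _ = elemConnI ends A T u v := hcard.symm

lemma finset_erase_comm {α : Type*} [DecidableEq α] (s : Finset α) (a b : α) :
    (s.erase a).erase b = (s.erase b).erase a := by
  ext x
  simp only [Finset.mem_erase]
  tauto

lemma sym2_exists_pair (z : Sym2 V) : ∃ c d, z = s(c, d) := by
  induction z using Sym2.ind with
  | _ c d => exact ⟨c, d, rfl⟩

/-- Replace the edge `f` in a cut by its endpoint `a`. -/
lemma cut_avoid_f {ends' : ι → Sym2 V} {A : Finset ι} {T : Set V} {f : ι} {a b : V}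
    (hends : ends' f = s(a, b)) (ha : a ∉ T)
    {Fv : Finset V} {Fe : Finset ι} (hT : (↑Fv : Set V) ⊆ Tᶜ) (hFe : Fe ⊆ A)
    {u v : V} (hconn : ¬ ConnectsI ends' (A \ Fe) (↑Fv) u v) :
    ∃ (Gv : Finset V) (Ge : Finset ι), (↑Gv : Set V) ⊆ Tᶜ ∧ Ge ⊆ A ∧ f ∉ Ge ∧
      Gv.card + Ge.card ≤ Fv.card + Fe.card ∧ ¬ ConnectsI ends' (A \ Ge) (↑Gv) u v := by
  by_cases hfFe : f ∈ Fe
  · refine ⟨insert a Fv, Fe.erase f, ?_, (Finset.erase_subset f Fe).trans hFe,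
      Finset.notMem_erase f Fe, ?_, ?_⟩
    · intro x hx
      simp only [Finset.coe_insert, Set.mem_insert_iff] at hx
      rcases hx with rfl | hx
      · exact ha
      · exact hT hx
    · have h1 := Finset.card_erase_of_mem hfFe
      have h2 := Finset.card_insert_le a Fv
      have h3 : 0 < Fe.card := Finset.card_pos.mpr ⟨f, hfFe⟩
      omega
    · intro hc
      apply hconn
      refine ReflTransGen.mono ?_ _ _ hc
      rintro x y ⟨⟨i, hi, he⟩, hx, hy⟩
      simp only [Finset.coe_insert, Set.mem_insert_iff, not_or] at hx hy
      have hiFe : i ∉ Fe := by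
        intro hiFe
        have : i = f := by
          by_contra hif
          exact (Finset.mem_sdiff.mp hi).2 (Finset.mem_erase.mpr ⟨hif, hiFe⟩)
        subst this
        rw [hends] at he
        rcases Sym2.eq_iff.mp he with ⟨rfl, rfl⟩ | ⟨rfl, rfl⟩
        · exact hx.1 rfl
        · exact hy.1 rfl
      exact ⟨⟨i, Finset.mem_sdiff.mpr ⟨(Finset.mem_sdiff.mp hi).1, hiFe⟩, he⟩, hx.2, hy.2⟩
  · exact ⟨Fv, Fe, hT, hFe, hfFe, le_rfl,  hconn⟩

lemma collapse_apply [DecidableEq V] (a b x : V) :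
    collapse a b x = if x = b then a else x := rfl

/-- A cut of `G - e` avoiding the edge `f` yields a cut of `(G/f) - e` of the same
size. -/
lemma contr_cut [DecidableEq V] {ends' : ι → Sym2 V} {A : Finset ι} {T : Set V}
    {f : ι} {a b : V}
    (hf : f ∈ A) (hends : ends' f = s(a, b)) (hab : a ≠ b) (ha : a ∉ T)
    {Fv : Finset V} {Fe : Finset ι} (hT : (↑Fv : Set V) ⊆ Tᶜ) (hFe : Fe ⊆ A)
    (hfFe : f ∉ Fe) {u v : V}
    (hconn : ¬ ConnectsI ends' (A \ Fe) (↑Fv) u v) :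
    ∃ (Gv : Finset V) (Ge : Finset ι), (↑Gv : Set V) ⊆ Tᶜ ∧ Ge ⊆ A.erase f ∧
      Gv.card + Ge.card ≤ Fv.card + Fe.card ∧
      ¬ ConnectsI (fun i => Sym2.map (collapse a b) (ends' i)) ((A.erase f) \ Ge)
        (↑Gv) u v := by
  have hFeA : Fe ⊆ A.erase f := fun i hi =>
    Finset.mem_erase.mpr ⟨fun h => hfFe (h ▸ hi), hFe hi⟩
  by_cases hmem : a ∈ Fv ∨ b ∈ Fv
  · -- contracted vertex lies in the cut
    refine ⟨Fv.image (collapse a b), Fe, ?_, hFeA, Nat.add_le_add_right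
      (Finset.card_image_le) _, ?_⟩
    · intro x hx
      simp only [Finset.coe_image, Set.mem_image, Finset.mem_coe] at hx
      obtain ⟨y, hy, rfl⟩ := hx
      rw [collapse_apply]
      split
      · exact ha
      · exact hT hy
    · have haG : a ∈ Fv.image (collapse a b) := by
        rcases hmem with h | h
        · exact Finset.mem_image.mpr ⟨a, h, by simp [collapse_apply, hab]⟩
        · exact Finset.mem_image.mpr ⟨b, h, by simp [collapse_apply]⟩
      intro hc
      apply hconn
      refine ReflTransGen.mono ?_ _ _ hc
      rintro x y ⟨⟨i, hi, he⟩, hx, hy⟩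
      simp only [Finset.mem_coe] at hx hy
      obtain ⟨c, d, hcd⟩ := sym2_exists_pair (ends' i)
      have he : Sym2.map (collapse a b) (ends' i) = s(x, y) := he
      rw [hcd, Sym2.map_pair_eq] at he
      have key : ∀ z w : V, collapse a b z = w → w ∉ Fv.image (collapse a b) →
          z = w ∧ w ∉ Fv := by
        intro z w hz hw
        have hwa : w ≠ a := fun h => hw (h ▸ haG)
        have hzb : z ≠ b := by
          intro h
          rw [collapse_apply, if_pos h] at hz
          exact hwa hz.symm
        rw [collapse_apply, if_neg hzb] at hz
        subst hz
        refine ⟨rfl, fun hzFv => hw ?_⟩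
        exact Finset.mem_image.mpr ⟨z, hzFv, by rw [collapse_apply, if_neg hzb]⟩
      have hi' : i ∈ A \ Fe := by
        have := Finset.mem_sdiff.mp hi
        exact Finset.mem_sdiff.mpr ⟨Finset.mem_of_mem_erase this.1, this.2⟩
      rcases Sym2.eq_iff.mp he with ⟨hc1, hd1⟩ | ⟨hc1, hd1⟩
      · obtain ⟨rfl, hx2⟩ := key c x hc1 hx
        obtain ⟨rfl, hy2⟩ := key d y hd1 hy
        exact ⟨⟨i, hi', hcd⟩, hx2, hy2⟩
      · obtain ⟨rfl, hy2⟩ := key c y hc1 hy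
        obtain ⟨rfl, hx2⟩ := key d x hd1 hx
        exact ⟨⟨i, hi', by rw [hcd, Sym2.eq_swap]⟩, hx2, hy2⟩
  · -- contracted vertices survive; use the edge f to cross between them
    push_neg at hmem
    obtain ⟨haFv, hbFv⟩ := hmem
    refine ⟨Fv, Fe, hT, hFeA, le_rfl, ?_⟩
    intro hc
    refine hconn ?_
    have hfadj : AdjI ends' (A \ Fe) (↑Fv) a b :=
      ⟨⟨f, Finset.mem_sdiff.mpr ⟨hf, hfFe⟩, hends⟩, haFv, hbFv⟩
    have hfadj' : AdjI ends' (A \ Fe) (↑Fv) b a :=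
      ⟨⟨f, Finset.mem_sdiff.mpr ⟨hf, hfFe⟩, by rw [hends, Sym2.eq_swap]⟩, hbFv, haFv⟩
    have key : ∀ x y : V,
        AdjI (fun i => Sym2.map (collapse a b) (ends' i)) ((A.erase f) \ Fe) (↑Fv) x y →
        ConnectsI ends' (A \ Fe) (↑Fv) x y := by
      rintro x y ⟨⟨i, hi, he⟩, hx, hy⟩
      simp only [Finset.mem_coe] at hx hy
      obtain ⟨c, d, hcd⟩ := sym2_exists_pair (ends' i)
      have he : Sym2.map (collapse a b) (ends' i) = s(x, y) := he
      rw [hcd, Sym2.map_pair_eq] at he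
      have hi' : i ∈ A \ Fe := by
        have := Finset.mem_sdiff.mp hi
        exact Finset.mem_sdiff.mpr ⟨Finset.mem_of_mem_erase this.1, this.2⟩
      -- from `collapse a b z = w`, `w ∉ Fv` get that `z ∉ Fv` and `w` connects to `z`
      have key2 : ∀ z w : V, collapse a b z = w → w ∉ (Fv : Set V) →
          z ∉ (Fv : Set V) ∧ ConnectsI ends' (A \ Fe) (↑Fv) w z := by
        intro z w hz hw
        by_cases hzb : z = b
        · subst hzb
          rw [collapse_apply, if_pos rfl] at hz
          subst hz
          exact ⟨hbFv, ReflTransGen.single hfadj⟩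
        · rw [collapse_apply, if_neg hzb] at hz
          subst hz
          exact ⟨hw, ReflTransGen.refl⟩
      rcases Sym2.eq_iff.mp he with ⟨hc1, hd1⟩ | ⟨hc1, hd1⟩
      · obtain ⟨hc2, hc3⟩ := key2 c x hc1 hx
        obtain ⟨hd2, hd3⟩ := key2 d y hd1 hy
        have hmid : ConnectsI ends' (A \ Fe) (↑Fv) c d :=
          ReflTransGen.single ⟨⟨i, hi', hcd⟩, hc2, hd2⟩
        have hy3 : ConnectsI ends' (A \ Fe) (↑Fv) d y := by
          by_cases hdb : d = b
          · subst hdb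
            rw [collapse_apply, if_pos rfl] at hd1
            subst hd1
            exact ReflTransGen.single hfadj'
          · rw [collapse_apply, if_neg hdb] at hd1
            subst hd1
            exact ReflTransGen.refl
        exact (hc3.trans hmid).trans hy3
      · obtain ⟨hc2, hc3⟩ := key2 c y hc1 hy
        obtain ⟨hd2, hd3⟩ := key2 d x hd1 hx
        have hmid : ConnectsI ends' (A \ Fe) (↑Fv) d c :=
          ReflTransGen.single ⟨⟨i, hi', by rw [hcd, Sym2.eq_swap]⟩, hd2, hc2⟩
        have hy3 : ConnectsI ends' (A \ Fe) (↑Fv) c y := by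
          by_cases hcb : c = b
          · subst hcb
            rw [collapse_apply, if_pos rfl] at hc1
            subst hc1
            exact ReflTransGen.single hfadj'
          · rw [collapse_apply, if_neg hcb] at hc1
            subst hc1
            exact ReflTransGen.refl
        have hx3 : ConnectsI ends' (A \ Fe) (↑Fv) x d := by
          by_cases hdb : d = b
          · subst hdb
            rw [collapse_apply, if_pos rfl] at hd1
            subst hd1
            exact ReflTransGen.single hfadj
          · rw [collapse_apply, if_neg hdb] at hd1
            subst hd1
            exact ReflTransGen.refl
        exact (hx3.trans hmid).trans hy3
    exact reflTransGen_of_le key hc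

/-- The key inequality for a contraction step: deleting `e` from the contracted
graph is at most as connected-preserving-costly as deleting `e` from the original. -/
lemma contr_elemConn_le [DecidableEq V] {ends : ι → Sym2 V} {A : Finset ι} {T : Set V}
    {φ : V → V} {f : ι} {a b : V}
    (hf : f ∈ A) (hends : Sym2.map φ (ends f) = s(a, b))
    (hab : a ≠ b) (ha : a ∉ T) {e : ι} (hef : e ≠ f)
    {u v : V} (huv : u ≠ v) :
    elemConnI (fun i => Sym2.map (collapse a b ∘ φ) (ends i)) ((A.erase f).erase e) T u v ≤
      elemConnI (fun i => Sym2.map φ (ends i)) (A.erase e) T u v := by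
  set ends' : ι → Sym2 V := fun i => Sym2.map φ (ends i) with hends'
  have hcomp : (fun i => Sym2.map (collapse a b ∘ φ) (ends i)) =
      fun i => Sym2.map (collapse a b) (ends' i) := by
    funext i
    rw [hends']
    exact (Sym2.map_map (ends i)).symm
  obtain ⟨Fv, Fe, hT, hFe, hcard, hconn⟩ :=
    Nat.sInf_mem (elemConnI_set_nonempty ends' (A.erase e) T huv)
  obtain ⟨Gv, Ge, hGT, hGe, hfGe, hGcard, hGconn⟩ :=
    cut_avoid_f (ends' := ends') (f := f) hends ha hT hFe hconn
  have hfA : f ∈ A.erase e := Finset.mem_erase.mpr ⟨fun h => hef h.symm, hf⟩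
  obtain ⟨Hv, He, hHT, hHe, hHcard, hHconn⟩ :=
    contr_cut (ends' := ends') (f := f) hfA hends hab ha hGT hGe hfGe hGconn
  have hcomm : (A.erase e).erase f = (A.erase f).erase e := finset_erase_comm A e f
  rw [hcomm] at hHe hHconn
  calc elemConnI (fun i => Sym2.map (collapse a b ∘ φ) (ends i)) ((A.erase f).erase e) T u v
      ≤ Hv.card + He.card := by
        rw [hcomp]
        exact Nat.sInf_le ⟨Hv, He, hHT, hHe, rfl, hHconn⟩
    _ ≤ Gv.card + Ge.card := hHcard
    _ ≤ Fv.card + Fe.card := hGcard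
    _ = elemConnI ends' (A.erase e) T u v := hcard.symm

end Helpers

/-- **Deletions later allow deletions now.**  Suppose `(A', φ')` is obtained from the
original graph (all edges, identity vertex map) by a sequence of element-connectivity
preserving reduction operations, and let `j ∈ A'` be a surviving edge whose original
endpoints `p, q` are mapped onto distinct non-terminals `φ' p ≠ φ' q`.  If deleting the
corresponding edge from the reduced graph preserves the element-connectivity between all
pairs of distinct terminals, then so does deleting the edge `j` from the original graph. -/
theorem deletion_later_allows_deletion_now {V ι : Type*} [Fintype V] [Fintype ι]
    [DecidableEq V]
    (ends : ι → Sym2 V) (T : Set V) (hloop : ∀ i, ¬ (ends i).IsDiag)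
    (A' : Finset ι) (φ' : V → V)
    (hred : Relation.ReflTransGen (RedStep ends T) (Finset.univ, id) (A', φ'))
    (j : ι) (hj : j ∈ A') (p q : V) (hpq : ends j = s(p, q))
    (hp' : φ' p ∉ T) (hq' : φ' q ∉ T) (hne : φ' p ≠ φ' q)
    (hdel : ∀ u ∈ T, ∀ v ∈ T, u ≠ v →
      elemConnI (fun i => Sym2.map φ' (ends i)) (A'.erase j) T u v =
        elemConnI (fun i => Sym2.map φ' (ends i)) A' T u v) :
    ∀ u ∈ T, ∀ v ∈ T, u ≠ v →
      elemConnI ends (Finset.univ.erase j) T u v =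
        elemConnI ends Finset.univ T u v  := by
  suffices h : j ∈ (Finset.univ : Finset ι) ∧ ∀ u ∈ T, ∀ v ∈ T, u ≠ v →
      elemConnI (fun i => Sym2.map (id : V → V) (ends i)) (Finset.univ.erase j) T u v =
        elemConnI (fun i => Sym2.map (id : V → V) (ends i)) Finset.univ T u v by
    intro u hu v hv huv
    have := h.2 u hu v hv huv
    simpa [Sym2.map_id] using this
  refine Relation.ReflTransGen.head_induction_on
    (motive := fun s (_ : Relation.ReflTransGen (RedStep ends T) s (A', φ')) =>
      j ∈ s.1 ∧ ∀ u ∈ T, ∀ v ∈ T, u ≠ v →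
        elemConnI (fun i => Sym2.map s.2 (ends i)) (s.1.erase j) T u v =
          elemConnI (fun i => Sym2.map s.2 (ends i)) s.1 T u v)
    hred ⟨hj, hdel⟩ ?_
  intro x y hstep hrest ih
  clear hrest
  cases hstep with
  | del A φ f a b hf hends hab ha hb hpres =>
    obtain ⟨hjB, ihd⟩ := ih
    have hjA : j ∈ A := Finset.mem_of_mem_erase hjB
    have hjf : j ≠ f := Finset.ne_of_mem_erase hjB
    refine ⟨hjA, fun u hu v hv huv => le_antisymm
      (elemConnI_erase_le _ _ _ _ huv) ?_⟩
    calc elemConnI (fun i => Sym2.map φ (ends i)) A T u v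
        = elemConnI (fun i => Sym2.map φ (ends i)) (A.erase f) T u v :=
          (hpres u hu v hv huv).symm
      _ = elemConnI (fun i => Sym2.map φ (ends i)) ((A.erase f).erase j) T u v :=
          (ihd u hu v hv huv).symm
      _ = elemConnI (fun i => Sym2.map φ (ends i)) ((A.erase j).erase f) T u v := by
          rw [finset_erase_comm]
      _ ≤ elemConnI (fun i => Sym2.map φ (ends i)) (A.erase j) T u v :=
          elemConnI_erase_le _ _ _ _ huv
  | contr A φ f a b hf hends hab ha hb hpres =>
    obtain ⟨hjB, ihd⟩ := ih
    have hjA : j ∈ A := Finset.mem_of_mem_erase hjB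
    have hjf : j ≠ f := Finset.ne_of_mem_erase hjB
    refine ⟨hjA, fun u hu v hv huv => le_antisymm
      (elemConnI_erase_le _ _ _ _ huv) ?_⟩
    calc elemConnI (fun i => Sym2.map φ (ends i)) A T u v
        = elemConnI (fun i => Sym2.map (collapse a b ∘ φ) (ends i)) (A.erase f) T u v :=
          (hpres u hu v hv huv).symm
      _ = elemConnI (fun i => Sym2.map (collapse a b ∘ φ) (ends i))
            ((A.erase f).erase j) T u v := (ihd u hu v hv huv).symm
      _ ≤ elemConnI (fun i => Sym2.map φ (ends i)) (A.erase j) T u v :=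
          contr_elemConn_le hf hends hab ha hjf huv


end
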